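/- arXiv:1505.05292 — 4 statements merged into one kernel-verified Lean document; each statement's English description precedes it below -/
import Mathlib

section
/- Let X(t,x) be a map from [0,T]×ℝⁿ to ℝⁿ such that there exists C ≥ 0 with X(t,·)_#λⁿ ≤ C·λⁿ for all t ∈ [0,T] (where λⁿ is Lebesgue measure and _# denotes pushforward). Then for any Lebesgue-negligible Borel set N ⊆ (0,T)×ℝⁿ, for λⁿ-a.e. x ∈ ℝⁿ the set {t ∈ (0,T) : (t, X(t,x)) ∈ N} is λ¹-negligible. -/
open MeasureTheory Set
open scoped NNReal ENNReal

/- By Fubini, "for a.e. `x`, a.e. `t` has `(t, X t x) ∉ N`" may be checked as "for a.e. `t`,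
a.e. `x` has `(t, X t x) ∉ N`". For a.e. `t` the slice `N_t` is null, and then so is its preimage
under `X t`, because `X t` pushes the measure forward to an absolutely continuous one. -/

theorem MeasureTheory.ae_measure_setOf_graph_mem_eq_zero
    {α β γ : Type*} [MeasurableSpace α] [MeasurableSpace β] [MeasurableSpace γ]
    {μ : Measure α} {ν : Measure β} {ρ : Measure γ} [SFinite μ] [SFinite ν] [SFinite ρ]
    {X : α → β → γ} (hX : Measurable (Function.uncurry X))
    {s : Set α} (hXac : ∀ t ∈ s, ν.map (X t) ≪ ρ)
    {N : Set (α × γ)} (hN : MeasurableSet N) (hNs : N ⊆ s ×ˢ univ) (hNnull : μ.prod ρ N = 0) :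
    ∀ᵐ x ∂ν, μ {t | (t, X t x) ∈ N} = 0 := by
  have hgraph : Measurable fun p : α × β => (p.1, X p.1 p.2) := measurable_fst.prodMk hX
  simp_rw [measure_eq_zero_iff_ae_notMem, mem_ofPred_eq]
  refine (Measure.ae_ae_comm (p := fun t x => (t, X t x) ∉ N) (hgraph hN).compl).mp ?_
  filter_upwards [Measure.ae_ae_of_ae_prod ((measure_eq_zero_iff_ae_notMem).mp hNnull)]
    with t hslice
  by_cases ht : t ∈ s
  · have hXt : Measurable (X t) := hX.comp measurable_prodMk_left
    exact ae_of_ae_map hXt.aemeasurable (hXac t ht hslice)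
  · exact ae_of_all _ fun x hx => ht (hNs hx).1

theorem stmt0_general {n : ℕ} (T : ℝ)
    (X : ℝ → (Fin n → ℝ) → (Fin n → ℝ))
    (hXmeas : Measurable (Function.uncurry X))
    (C : ℝ≥0) (hC : ∀ t ∈ Icc (0:ℝ) T,
      Measure.map (X t) (volume : Measure (Fin n → ℝ)) ≤ (C : ℝ≥0∞) • volume)
    (N : Set (ℝ × (Fin n → ℝ))) (hNmeas : MeasurableSet N)
    (hNsub : N ⊆ (Ioo 0 T) ×ˢ univ)
    (hNnull : (volume : Measure (ℝ × (Fin n → ℝ))) N = 0) :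
    ∀ᵐ x ∂(volume : Measure (Fin n → ℝ)),
      (volume : Measure ℝ) {t ∈ Ioo 0 T | (t, X t x) ∈ N} = 0 := by
  have hac : ∀ t ∈ Ioo (0:ℝ) T, Measure.map (X t) volume ≪ volume := fun t ht =>
    Measure.absolutelyContinuous_of_le_smul (hC t (Ioo_subset_Icc_self ht))
  have hset : ∀ x, {t ∈ Ioo 0 T | (t, X t x) ∈ N} = {t | (t, X t x) ∈ N} := fun x =>
    Set.ext fun _ => and_iff_right_of_imp fun h => (hNsub h).1
  simp_rw [hset]
  exact ae_measure_setOf_graph_mem_eq_zero hXmeas hac hNmeas hNsub hNnull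

/-- If `X : [0,T] × ℝⁿ → ℝⁿ` is measurable and satisfies the compressibility
bound `X(t,·)_# λⁿ ≤ C λⁿ` for all `t ∈ [0,T]`, then for every Lebesgue-negligible Borel
set `N ⊆ (0,T) × ℝⁿ`, for a.e. `x` the set `{t ∈ (0,T) : (t, X t x) ∈ N}` is negligible. -/
theorem stmt0 {n : ℕ} (T : ℝ) (hT : 0 < T)
    (X : ℝ → (Fin n → ℝ) → (Fin n → ℝ))
    (hXmeas : Measurable (Function.uncurry X))
    (C : ℝ≥0) (hC : ∀ t ∈ Icc (0:ℝ) T,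
      Measure.map (X t) (volume : Measure (Fin n → ℝ)) ≤ (C : ℝ≥0∞) • volume)
    (N : Set (ℝ × (Fin n → ℝ))) (hNmeas : MeasurableSet N)
    (hNsub : N ⊆ (Ioo 0 T) ×ˢ univ)
    (hNnull : (volume : Measure (ℝ × (Fin n → ℝ))) N = 0) :
    ∀ᵐ x ∂(volume : Measure (Fin n → ℝ)),
      (volume : Measure ℝ) {t ∈ Ioo 0 T | (t, X t x) ∈ N} = 0 :=
  stmt0_general T X hXmeas C hC N hNmeas hNsub hNnull
end

section
/- Lions' lemma (generalized Lax–Milgram): Let V be a normed space and H a Hilbert space with V continuously embedded in H, ‖v‖_H ≤ ‖v‖_V for all v ∈ V. Let B : V × H → ℝ be bilinear with B(v,·) continuous on H for every v ∈ V, and coercive: there is c > 0 with B(v,v) ≥ c‖v‖_V² for all v ∈ V. Then for every continuous linear functional ℓ ∈ V' there exists h ∈ H such that B(v,h) = ℓ(v) for all v ∈ V, and ‖h‖_H ≤ ‖ℓ‖_{V'}/c. -/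
open scoped RealInnerProductSpace

/-!
Riesz turns `B` into an operator `T : V → H` with `B v h = ⟪T v, h⟫`. Coercivity together with
`‖J v‖ ≤ ‖v‖` gives `c ‖v‖ ≤ ‖T v‖`, so `T` is injective and `T v ↦ ℓ v` is a functional on the
range of `T` of norm at most `‖ℓ‖ / c`. A norm-preserving Hahn–Banach extension of it to `H`,
represented by Riesz as `⟪h, ·⟫`, yields the required `h`.
-/

theorem LinearMap.exists_dual_lift_of_bounded_below {𝕜 V E : Type*} [RCLike 𝕜]
    [NormedAddCommGroup V] [NormedSpace 𝕜 V] [SeminormedAddCommGroup E] [NormedSpace 𝕜 E]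
    (T : V →ₗ[𝕜] E) {c : ℝ} (hc : 0 < c) (hT : ∀ v, c * ‖v‖ ≤ ‖T v‖) (ℓ : StrongDual 𝕜 V) :
    ∃ g : StrongDual 𝕜 E, (∀ v, g (T v) = ℓ v) ∧ ‖g‖ ≤ ‖ℓ‖ / c := by
  have hinj : Function.Injective T := by
    refine (injective_iff_map_eq_zero T).2 fun v hv => norm_le_zero_iff.1 ?_
    have := hT v
    rw [hv, norm_zero] at this
    exact nonpos_of_mul_nonpos_right this hc
  let e := LinearEquiv.ofInjective T hinj
  have hbound : ∀ w, ‖(ℓ.toLinearMap ∘ₗ e.symm.toLinearMap) w‖ ≤ ‖ℓ‖ / c * ‖w‖ := fun w => by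
    have hw : c * ‖e.symm w‖ ≤ ‖w‖ :=
      (hT _).trans_eq (congrArg (‖·‖) (congrArg Subtype.val (e.apply_symm_apply w)))
    calc ‖ℓ (e.symm w)‖ ≤ ‖ℓ‖ * ‖e.symm w‖ := ℓ.le_opNorm _
      _ ≤ ‖ℓ‖ * (‖w‖ / c) := by gcongr; rwa [le_div_iff₀' hc]
      _ = ‖ℓ‖ / c * ‖w‖ := by ring
  obtain ⟨g, hg, hgnorm⟩ := exists_extension_norm_eq _ (LinearMap.mkContinuous _ _ hbound)
  exact ⟨g, fun v => (hg (e v)).trans (by simp),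
    hgnorm ▸ LinearMap.mkContinuous_norm_le _ (by positivity) hbound⟩

theorem mul_norm_le_norm_of_coercive {V H : Type*} [NormedAddCommGroup V]
    [NormedAddCommGroup H] [InnerProductSpace ℝ H] {T J : V → H} (hJ : ∀ v, ‖J v‖ ≤ ‖v‖)
    {c : ℝ} (hcoer : ∀ v, c * ‖v‖ ^ 2 ≤ ⟪T v, J v⟫) (v : V) : c * ‖v‖ ≤ ‖T v‖ := by
  rcases (norm_nonneg v).eq_or_lt with hv | hv
  · simp [← hv]
  refine le_of_mul_le_mul_right ?_ hv
  calc c * ‖v‖ * ‖v‖ = c * ‖v‖ ^ 2 := by ring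
    _ ≤ ⟪T v, J v⟫ := hcoer v
    _ ≤ ‖T v‖ * ‖J v‖ := real_inner_le_norm _ _
    _ ≤ ‖T v‖ * ‖v‖ := by gcongr; exact hJ v

noncomputable def rieszOperator {V H : Type*} [AddCommGroup V] [Module ℝ V] [NormedAddCommGroup H]
    [InnerProductSpace ℝ H] [CompleteSpace H] (B : V →ₗ[ℝ] H →L[ℝ] ℝ) : V →ₗ[ℝ] H :=
  ((InnerProductSpace.toDual ℝ H).symm.toLinearEquiv.toLinearMap : StrongDual ℝ H →ₗ[ℝ] H) ∘ₗ B

theorem inner_rieszOperator {V H : Type*} [AddCommGroup V] [Module ℝ V] [NormedAddCommGroup H]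
    [InnerProductSpace ℝ H] [CompleteSpace H] (B : V →ₗ[ℝ] H →L[ℝ] ℝ) (v : V) (h : H) :
    ⟪rieszOperator B v, h⟫ = B v h :=
  InnerProductSpace.toDual_symm_apply (y := B v)

/-- Lions' lemma (generalized Lax–Milgram). `V` a normed space continuously
embedded (via `J`, with `‖J v‖ ≤ ‖v‖`) in a Hilbert space `H`; `B : V × H → ℝ` bilinear
(linear in `v`, continuous linear in `h`) and coercive (`B v (J v) ≥ c ‖v‖²`). Then any
`ℓ ∈ V'` is represented by some `h ∈ H` with `‖h‖ ≤ ‖ℓ‖ / c`. -/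
theorem stmt1
    (V : Type*) [NormedAddCommGroup V] [NormedSpace ℝ V]
    (H : Type*) [NormedAddCommGroup H] [InnerProductSpace ℝ H] [CompleteSpace H]
    (J : V →ₗ[ℝ] H) (hJ : ∀ v : V, ‖J v‖ ≤ ‖v‖)
    (B : V →ₗ[ℝ] H →L[ℝ] ℝ)
    (c : ℝ) (hc : 0 < c)
    (hcoer : ∀ v : V, c * ‖v‖ ^ 2 ≤ B v (J v))
    (ℓ : V →L[ℝ] ℝ) :
    ∃ h : H, (∀ v : V, B v h = ℓ v) ∧ ‖h‖ ≤ ‖ℓ‖ / c := by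
  have hT : ∀ v, c * ‖v‖ ≤ ‖rieszOperator B v‖ :=
    mul_norm_le_norm_of_coercive hJ fun v => (hcoer v).trans_eq (inner_rieszOperator B v (J v)).symm
  obtain ⟨g, hgT, hg⟩ := (rieszOperator B).exists_dual_lift_of_bounded_below hc hT ℓ
  refine ⟨(InnerProductSpace.toDual ℝ H).symm g, fun v => ?_, ?_⟩
  · rw [← inner_rieszOperator, real_inner_comm, InnerProductSpace.toDual_symm_apply, hgT]
  · rwa [LinearIsometryEquiv.norm_map]
end

section
/- Let ρ : ℝⁿ → [0,∞) be a smooth even convolution kernel with compact support and ∫ρ = 1, and let c be a smooth vector field on ℝⁿ with div c = 0, and v smooth with compact support. Then the commutator C^ε(c,v) := c·∇(v∗ρ_ε) − (c·∇v)∗ρ_ε converges pointwise to 0 as ε → 0, where ρ_ε(x) = ε^{-n}ρ(x/ε). Specifically, lim_{ε→0} C^ε(c,v)(x) = v(x)·( ∫ ⟨∇c(x)y, ∇ρ(y)⟩ dy + div c(x) ) = 0. -/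
open MeasureTheory Filter
open scoped Topology RealInnerProductSpace


lemma aux_inner_gradient {n : ℕ} (f : EuclideanSpace ℝ (Fin n) → ℝ) (x w : EuclideanSpace ℝ (Fin n)) :
    ⟪gradient f x, w⟫ = fderiv ℝ f x w := by
  simp [gradient, InnerProductSpace.toDual_symm_apply]

lemma aux_ibp {n : ℕ} (ρ : EuclideanSpace ℝ (Fin n) → ℝ)
    (hρ : ContDiff ℝ (⊤ : ℕ∞) ρ) (hρc : HasCompactSupport ρ) (hρ1 : ∫ y, ρ y = 1)
    (A : EuclideanSpace ℝ (Fin n) →L[ℝ] EuclideanSpace ℝ (Fin n)) :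
    (∫ y, ⟪A y, gradient ρ y⟫) = - ∑ i, A (EuclideanSpace.single i (1:ℝ)) i := by
  have hρi : Integrable ρ := hρ.continuous.integrable_of_hasCompactSupport hρc
  have hdiff : Differentiable ℝ ρ := hρ.differentiable (by simp)
  have hfd : Continuous (fderiv ℝ ρ) := hρ.continuous_fderiv (by simp)
  have hfdc : HasCompactSupport (fderiv ℝ ρ) := hρc.fderiv ℝ
  -- rewrite integrand
  have h1 : ∀ y : EuclideanSpace ℝ (Fin n), ⟪A y, gradient ρ y⟫
      = ∑ i, y i * fderiv ℝ ρ y (A (EuclideanSpace.single i (1:ℝ))) := by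
    intro y
    rw [real_inner_comm, aux_inner_gradient]
    have hy : y = ∑ i, y i • EuclideanSpace.single i (1:ℝ) := by
      have := (EuclideanSpace.basisFun (Fin n) ℝ).sum_repr y
      simp only [EuclideanSpace.basisFun_apply, EuclideanSpace.basisFun_repr] at this
      exact this.symm
    have hAy : A y = ∑ i, y i • A (EuclideanSpace.single i (1:ℝ)) := by
      conv_lhs => rw [hy]
      rw [map_sum]
      simp
    rw [hAy, map_sum]
    simp [smul_eq_mul]
  rw [integral_congr_ae (Eventually.of_forall h1)]
  have hint : ∀ w : EuclideanSpace ℝ (Fin n), ∀ i : Fin n,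
      Integrable (fun y : EuclideanSpace ℝ (Fin n) => y i * fderiv ℝ ρ y w) := by
    intro w i
    have hc1 : Continuous fun y : EuclideanSpace ℝ (Fin n) => y i * fderiv ℝ ρ y w := by
      fun_prop
    apply hc1.integrable_of_hasCompactSupport
    have h2 : HasCompactSupport (fun y : EuclideanSpace ℝ (Fin n) => fderiv ℝ ρ y w) :=
      hfdc.comp_left (g := fun L : EuclideanSpace ℝ (Fin n) →L[ℝ] ℝ => L w) (by simp)
    exact h2.mul_left
  rw [integral_finset_sum _ (fun i _ => hint _ i)]
  rw [← Finset.sum_neg_distrib]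
  apply Finset.sum_congr rfl
  intro i _
  set w := A (EuclideanSpace.single i (1:ℝ)) with hw
  have hproj : (fun y : EuclideanSpace ℝ (Fin n) => y i)
      = fun y => (EuclideanSpace.proj (𝕜 := ℝ) i) y := by ext y; simp
  have key := integral_mul_fderiv_eq_neg_fderiv_mul_of_integrable (μ := volume)
      (f := fun y : EuclideanSpace ℝ (Fin n) => y i) (g := ρ) (v := w)
      ?_ ?_ ?_ ?_ (fun y _ => (hρ.differentiable (by simp)) y)
  · rw [key]
    have : ∀ y : EuclideanSpace ℝ (Fin n), fderiv ℝ (fun y : EuclideanSpace ℝ (Fin n) => y i) y w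
        = w i := by
      intro y
      rw [hproj, (EuclideanSpace.proj (𝕜 := ℝ) i).fderiv]
      simp
    rw [integral_congr_ae (Eventually.of_forall fun y => by rw [this y])]
    rw [integral_const_mul, hρ1, mul_one]
  · -- Integrable fun y => fderiv (fun y => y i) y w * ρ y
    have : ∀ y : EuclideanSpace ℝ (Fin n), fderiv ℝ (fun y : EuclideanSpace ℝ (Fin n) => y i) y w
        = w i := by
      intro y
      rw [hproj, (EuclideanSpace.proj (𝕜 := ℝ) i).fderiv]
      simp
    simpa [this] using hρi.const_mul (w i)
  · exact hint w i
  · have hc1 : Continuous fun y : EuclideanSpace ℝ (Fin n) => y i * ρ y := by fun_prop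
    exact hc1.integrable_of_hasCompactSupport hρc.mul_left
  · rw [hproj]; exact fun y _ => (EuclideanSpace.proj (𝕜 := ℝ) i).differentiable y

lemma aux_tendsto {n : ℕ}
    (ρ : EuclideanSpace ℝ (Fin n) → ℝ)
    (c : EuclideanSpace ℝ (Fin n) → EuclideanSpace ℝ (Fin n))
    (v : EuclideanSpace ℝ (Fin n) → ℝ)
    (hρ : ContDiff ℝ (⊤ : ℕ∞) ρ) (hρc : HasCompactSupport ρ) (hρ0 : ∀ y, 0 ≤ ρ y)
    (hc : ContDiff ℝ (⊤ : ℕ∞) c)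
    (hv : ContDiff ℝ (⊤ : ℕ∞) v) (hvc : HasCompactSupport v)
    (x : EuclideanSpace ℝ (Fin n)) :
    Tendsto (fun ε : ℝ =>
        ⟪c x, gradient (fun z => ∫ y, v (z - y) * ((ε ^ n)⁻¹ * ρ (ε⁻¹ • y))) x⟫
        - ∫ y, ⟪c (x - y), gradient v (x - y)⟫ * ((ε ^ n)⁻¹ * ρ (ε⁻¹ • y)))
      (𝓝[>] (0 : ℝ)) (𝓝 0) := by
  have hρcont := hρ.continuous
  have hρint : Integrable ρ := hρcont.integrable_of_hasCompactSupport hρc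
  have hfdv : Continuous (fderiv ℝ v) := hv.continuous_fderiv (by simp)
  set h : EuclideanSpace ℝ (Fin n) → ℝ :=
    fun y => fderiv ℝ v (x - y) (c x - c (x - y)) with hh
  have hhcont : Continuous h := by
    apply Continuous.clm_apply
    · exact hfdv.comp (continuous_const.sub continuous_id)
    · exact continuous_const.sub (hc.continuous.comp (continuous_const.sub continuous_id))
  -- the limit of the rescaled integrals
  have key : Tendsto (fun ε : ℝ => ∫ u, ρ u * h (ε • u)) (𝓝[>] (0:ℝ)) (𝓝 0) := by
    obtain ⟨R, hR⟩ := hρc.isBounded.subset_closedBall 0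
    obtain ⟨C, hC⟩ := (isCompact_closedBall (0 : EuclideanSpace ℝ (Fin n)) R).exists_bound_of_continuousOn hhcont.continuousOn
    set M : ℝ := max C 0 with hM
    have h0 : h ((0:ℝ) • (0 : EuclideanSpace ℝ (Fin n))) = 0 := by
      simp [hh]
    have hlim : Tendsto (fun ε : ℝ => ∫ u, ρ u * h (ε • u)) (𝓝[>] (0:ℝ))
        (𝓝 (∫ u : EuclideanSpace ℝ (Fin n), ρ u * h ((0:ℝ) • u))) := by
      apply tendsto_integral_filter_of_dominated_convergence (bound := fun u => ρ u * M)
      · filter_upwards with ε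
        exact (hρcont.mul (hhcont.comp (continuous_const_smul ε))).aestronglyMeasurable
      · filter_upwards [Ioc_mem_nhdsGT_of_mem (Set.mem_Ico.2 ⟨le_refl (0:ℝ), zero_lt_one⟩)] with ε hε
        filter_upwards with u
        by_cases hu : u ∈ tsupport ρ
        · have hu' : ‖u‖ ≤ R := by
            have := hR hu
            simpa [Metric.mem_closedBall, dist_zero_right] using this
          have hεu : ε • u ∈ Metric.closedBall (0 : EuclideanSpace ℝ (Fin n)) R := by
            simp only [Metric.mem_closedBall, dist_zero_right, norm_smul, Real.norm_eq_abs,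
              abs_of_pos hε.1]
            calc ε * ‖u‖ ≤ 1 * ‖u‖ := by
                  exact mul_le_mul_of_nonneg_right hε.2 (norm_nonneg u)
              _ = ‖u‖ := one_mul _
              _ ≤ R := hu'
          rw [norm_mul, Real.norm_of_nonneg (hρ0 u)]
          exact mul_le_mul_of_nonneg_left ((hC _ hεu).trans (le_max_left _ _)) (hρ0 u)
        · rw [image_eq_zero_of_notMem_tsupport hu]
          simp [mul_nonneg (hρ0 u) (le_max_right C 0)]
      · exact hρint.mul_const M
      · filter_upwards with u
        have : Continuous fun ε : ℝ => ρ u * h (ε • u) :=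
          continuous_const.mul (hhcont.comp (continuous_id.smul continuous_const))
        exact (this.tendsto 0).mono_left nhdsWithin_le_nhds
    have : (∫ u : EuclideanSpace ℝ (Fin n), ρ u * h ((0:ℝ) • u)) = 0 := by
      simp [hh]
    rwa [this] at hlim
  apply key.congr'
  filter_upwards [self_mem_nhdsWithin] with ε (hε : (0:ℝ) < ε)
  -- now ε > 0 : show ∫ u, ρ u * h (ε • u) = commutator expression
  have hεne : (ε:ℝ) ≠ 0 := ne_of_gt hε
  have hεn : (ε:ℝ)^n ≠ 0 := pow_ne_zero _ hεne
  set φ : EuclideanSpace ℝ (Fin n) → ℝ := fun y => (ε ^ n)⁻¹ * ρ (ε⁻¹ • y) with hφdef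
  have hφcont : Continuous φ := continuous_const.mul (hρcont.comp (continuous_const_smul _))
  have hφcs : HasCompactSupport φ := by
    have h1 : HasCompactSupport fun y : EuclideanSpace ℝ (Fin n) => ρ (ε⁻¹ • y) :=
      hρc.comp_isClosedEmbedding
        (Homeomorph.smulOfNeZero (ε⁻¹) (inv_ne_zero hεne)).isClosedEmbedding
    exact h1.mul_left
  have hφloc : LocallyIntegrable φ volume := hφcont.locallyIntegrable
  have hconv : (fun z : EuclideanSpace ℝ (Fin n) =>
        ∫ y, v (z - y) * ((ε ^ n)⁻¹ * ρ (ε⁻¹ • y)))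
      = convolution φ v (ContinuousLinearMap.mul ℝ ℝ) volume := by
    funext z
    rw [convolution_def]
    exact integral_congr_ae (Eventually.of_forall fun y => by
      simp only [ContinuousLinearMap.mul_apply', hφdef]; ring)
  have hder := HasCompactSupport.hasFDerivAt_convolution_right
      (ContinuousLinearMap.mul ℝ ℝ) hvc hφloc (hv.of_le (by simp)) x
  have hgradterm :
      ⟪c x, gradient (fun z => ∫ y, v (z - y) * ((ε ^ n)⁻¹ * ρ (ε⁻¹ • y))) x⟫
      = ∫ y, φ y * fderiv ℝ v (x - y) (c x) := by
    rw [real_inner_comm, aux_inner_gradient, hconv, hder.fderiv,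
      convolution_precompR_apply (ContinuousLinearMap.mul ℝ ℝ) hφloc (hvc.fderiv ℝ) hfdv x (c x),
      convolution_def]
    simp only [ContinuousLinearMap.mul_apply']
  have hsecond :
      (∫ y, ⟪c (x - y), gradient v (x - y)⟫ * ((ε ^ n)⁻¹ * ρ (ε⁻¹ • y)))
      = ∫ y, φ y * fderiv ℝ v (x - y) (c (x - y)) :=
    integral_congr_ae (Eventually.of_forall fun y => by
      show ⟪c (x - y), gradient v (x - y)⟫ * ((ε ^ n)⁻¹ * ρ (ε⁻¹ • y))
          = φ y * fderiv ℝ v (x - y) (c (x - y))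
      rw [real_inner_comm, aux_inner_gradient, mul_comm])
  have hcont1 : Continuous fun y => φ y * fderiv ℝ v (x - y) (c x) :=
    hφcont.mul (Continuous.clm_apply (hfdv.comp (continuous_const.sub continuous_id))
      continuous_const)
  have hcont2 : Continuous fun y => φ y * fderiv ℝ v (x - y) (c (x - y)) :=
    hφcont.mul (Continuous.clm_apply (hfdv.comp (continuous_const.sub continuous_id))
      (hc.continuous.comp (continuous_const.sub continuous_id)))
  have hig1 : Integrable (fun y => φ y * fderiv ℝ v (x - y) (c x)) :=
    hcont1.integrable_of_hasCompactSupport hφcs.mul_right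
  have hig2 : Integrable (fun y => φ y * fderiv ℝ v (x - y) (c (x - y))) :=
    hcont2.integrable_of_hasCompactSupport hφcs.mul_right
  have hdiffeq : (∫ y, φ y * fderiv ℝ v (x - y) (c x))
        - (∫ y, φ y * fderiv ℝ v (x - y) (c (x - y)))
      = ∫ y, φ y * h y := by
    rw [← integral_sub hig1 hig2]
    exact integral_congr_ae (Eventually.of_forall fun y => by
      rw [hh]; simp only; rw [map_sub, mul_sub])
  have hcov : (∫ y, φ y * h y) = ∫ u, ρ u * h (ε • u) := by
    have hφε : ∀ u : EuclideanSpace ℝ (Fin n), φ (ε • u) = (ε ^ n)⁻¹ * ρ u := by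
      intro u
      show (ε ^ n)⁻¹ * ρ (ε⁻¹ • ε • u) = (ε ^ n)⁻¹ * ρ u
      rw [smul_smul, inv_mul_cancel₀ hεne, one_smul]
    have hcs := MeasureTheory.Measure.integral_comp_smul_of_nonneg (volume)
        (fun y => φ y * h y) ε (hR := le_of_lt hε)
    have hfin : Module.finrank ℝ (EuclideanSpace ℝ (Fin n)) = n := by
      simp [finrank_euclideanSpace]
    rw [hfin] at hcs
    simp only [hφε, mul_assoc, smul_eq_mul] at hcs
    rw [integral_const_mul] at hcs
    exact (mul_left_cancel₀ (inv_ne_zero hεn) hcs).symm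
  rw [hgradterm, hsecond, hdiffeq, hcov]

/-- For a smooth even compactly supported mollifier `ρ` with `∫ρ = 1`, a
smooth divergence-free vector field `c` and `v` smooth with compact support, the commutator
`C^ε(c,v) = c·∇(v∗ρ_ε) − (c·∇v)∗ρ_ε` converges pointwise as `ε → 0⁺` to
`v(x)·(∫⟨∇c(x)y, ∇ρ(y)⟩ dy + div c(x))`, which is `0`. -/
theorem stmt10 {n : ℕ}
    (ρ : EuclideanSpace ℝ (Fin n) → ℝ)
    (c : EuclideanSpace ℝ (Fin n) → EuclideanSpace ℝ (Fin n))
    (v : EuclideanSpace ℝ (Fin n) → ℝ)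
    (hρ : ContDiff ℝ (⊤ : ℕ∞) ρ) (hρc : HasCompactSupport ρ) (hρ0 : ∀ y, 0 ≤ ρ y)
    (hρeven : ∀ y, ρ (-y) = ρ y) (hρ1 : ∫ y, ρ y = 1)
    (hc : ContDiff ℝ (⊤ : ℕ∞) c)
    (hv : ContDiff ℝ (⊤ : ℕ∞) v) (hvc : HasCompactSupport v)
    (hdivfree : ∀ x, (∑ i : Fin n,
      fderiv ℝ c x (EuclideanSpace.single i (1:ℝ)) i) = 0)
    (x : EuclideanSpace ℝ (Fin n)) :
    Tendsto (fun ε : ℝ =>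
        ⟪c x, gradient (fun z => ∫ y, v (z - y) * ((ε ^ n)⁻¹ * ρ (ε⁻¹ • y))) x⟫
        - ∫ y, ⟪c (x - y), gradient v (x - y)⟫ * ((ε ^ n)⁻¹ * ρ (ε⁻¹ • y)))
      (𝓝[>] (0 : ℝ))
      (𝓝 (v x * ((∫ y, ⟪fderiv ℝ c x y, gradient ρ y⟫)
          + ∑ i : Fin n, fderiv ℝ c x (EuclideanSpace.single i (1:ℝ)) i)))
    ∧ v x * ((∫ y, ⟪fderiv ℝ c x y, gradient ρ y⟫)
          + ∑ i : Fin n, fderiv ℝ c x (EuclideanSpace.single i (1:ℝ)) i) = 0 := by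
  have hI := aux_ibp ρ hρ hρc hρ1 (fderiv ℝ c x)
  have hzero : v x * ((∫ y, ⟪fderiv ℝ c x y, gradient ρ y⟫)
      + ∑ i : Fin n, fderiv ℝ c x (EuclideanSpace.single i (1:ℝ)) i) = 0 := by
    rw [hI, hdivfree x]
    simp
  refine ⟨?_, hzero⟩
  rw [hzero]
  exact aux_tendsto ρ c v hρ hρc hρ0 hc hv hvc x
end

section
/- Let η be a Borel probability measure on C([0,T]; X) (X a Polish space) concentrated on curves η such that for every f in a fixed countable family A* of 1-Lipschitz-like functions (|b_t(f)| ≤ |b_t|_* everywhere), f∘η is absolutely continuous with (f∘η)'(t) = b_t(f)(η(t)) a.e. Assume |b| ∈ L¹((0,T); L^p(X,𝔪)) and (e_t)_#η = u_t 𝔪 with u ∈ L^∞((0,T); L^{p'}). Then η-a.e. curve η is absolutely continuous with respect to the distance d_{A*}(x,y) := sup_{f∈A*}|f(x)−f(y)|, with metric speed |η̇|(t) ≤ |b_t|_*(η(t)) for a.e. t, where |b_t|_* := sup_{f∈A*}|b_t(f)|. -/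
open MeasureTheory Set
open scoped ENNReal

/-!
The metric speed of a curve for `d_{A*}` is the supremum of the speeds of the scalar curves
`f ∘ η`, `f ∈ A*`, each of which is bounded by `|b_t|_*(η(t))`; so everything reduces to showing
that `t ↦ |b_t|_*(η(t))` is integrable along almost every curve. Its expectation at time `t` is
`∫ |b_t|_* u_t d𝔪 ≤ ‖u_t‖_{p'} ‖b_t‖_p` by Hölder, and integrating in time (Tonelli) gives
`E ∫_0^T |b_t|_*(η(t)) dt ≤ ‖u‖_{L^∞ L^{p'}} ‖b‖_{L^1 L^p} < ∞`.
-/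

section MarginalHolder

variable {X : Type*} [MeasurableSpace X] {𝔪 : Measure X} [SFinite 𝔪] {p q : ℝ≥0∞}

/-- The density `u` need not be measurable: it is replaced by a measurable minorant with the same
`withDensity`. -/
theorem lintegral_ofReal_withDensity_le_eLpNorm_mul (hpq : p⁻¹ + q⁻¹ = 1) {u f : X → ℝ}
    (hf : Measurable f) :
    ∫⁻ x, ENNReal.ofReal (f x) ∂𝔪.withDensity (fun x => ENNReal.ofReal (u x))
      ≤ eLpNorm u q 𝔪 * eLpNorm f p 𝔪 := by
  obtain ⟨g, hgm, hgu, hg⟩ := exists_measurable_le_withDensity_eq 𝔪 fun x => ENNReal.ofReal (u x)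
  have hg_ne_top : ∀ x, g x ≠ ∞ := fun x => ne_top_of_le_ne_top ENNReal.ofReal_ne_top (hgu x)
  have : ENNReal.HolderConjugate q p := ⟨by rw [inv_one, ← hpq, add_comm]⟩
  rw [← hg, lintegral_withDensity_eq_lintegral_mul _ hgm hf.ennreal_ofReal]
  calc ∫⁻ x, (g * fun x => ENNReal.ofReal (f x)) x ∂𝔪
      ≤ ∫⁻ x, ‖((fun x => (g x).toReal) • f) x‖ₑ ∂𝔪 := lintegral_mono fun x => by
        simp only [Pi.mul_apply, smul_eq_mul, enorm_mul,
          Real.enorm_of_nonneg ENNReal.toReal_nonneg, ENNReal.ofReal_toReal (hg_ne_top x)]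
        gcongr
        exact Real.ofReal_le_enorm _
    _ = eLpNorm ((fun x => (g x).toReal) • f) 1 𝔪 := eLpNorm_one_eq_lintegral_enorm.symm
    _ ≤ eLpNorm (fun x => (g x).toReal) q 𝔪 * eLpNorm f p 𝔪 :=
      eLpNorm_smul_le_mul_eLpNorm hf.aestronglyMeasurable hgm.ennreal_toReal.aestronglyMeasurable
    _ ≤ eLpNorm u q 𝔪 * eLpNorm f p 𝔪 := by
      gcongr
      refine eLpNorm_mono fun x => ?_
      rw [Real.norm_of_nonneg ENNReal.toReal_nonneg, Real.norm_eq_abs]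
      exact ENNReal.toReal_le_of_le_ofReal (abs_nonneg _)
        ((hgu x).trans (ENNReal.ofReal_le_ofReal (le_abs_self _)))

theorem ae_lintegral_ofReal_comp_lt_top {Ω : Type*} [MeasurableSpace Ω] {P : Measure Ω}
    [SFinite P] (hpq : p⁻¹ + q⁻¹ = 1) {S : Set ℝ} (hS : MeasurableSet S)
    {b : ℝ → X → ℝ} (hb : Measurable (Function.uncurry b))
    (hb_int : ∫⁻ t in S, eLpNorm (b t) p 𝔪 < ∞)
    {u : ℝ → X → ℝ} {M : ℝ≥0∞} (hM : M < ∞) (hu : ∀ t ∈ S, eLpNorm (u t) q 𝔪 ≤ M)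
    {γ : Ω → ℝ → X} (hγ : Measurable fun z : Ω × ℝ => γ z.1 z.2)
    (hmarg : ∀ t ∈ S, Measure.map (fun ω => γ ω t) P
      = 𝔪.withDensity (fun x => ENNReal.ofReal (u t x))) :
    ∀ᵐ ω ∂P, ∫⁻ t in S, ENNReal.ofReal (b t (γ ω t)) < ∞ := by
  have hmeas : Measurable fun z : Ω × ℝ => ENNReal.ofReal (b z.2 (γ z.1 z.2)) :=
    (hb.comp (measurable_snd.prodMk hγ)).ennreal_ofReal
  have hexp : ∀ t ∈ S, ∫⁻ ω, ENNReal.ofReal (b t (γ ω t)) ∂P ≤ M * eLpNorm (b t) p 𝔪 := by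
    intro t ht
    have hγt : Measurable fun ω => γ ω t := hγ.comp (measurable_id.prodMk measurable_const)
    rw [← lintegral_map hb.of_uncurry_left.ennreal_ofReal hγt, hmarg t ht]
    exact (lintegral_ofReal_withDensity_le_eLpNorm_mul hpq hb.of_uncurry_left).trans
      (by gcongr; exact hu t ht)
  refine ae_lt_top hmeas.lintegral_prod_right' (ne_of_lt ?_)
  calc ∫⁻ ω, (∫⁻ t in S, ENNReal.ofReal (b t (γ ω t))) ∂P
      = ∫⁻ t in S, ∫⁻ ω, ENNReal.ofReal (b t (γ ω t)) ∂P :=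
        lintegral_lintegral_swap hmeas.aemeasurable
    _ ≤ ∫⁻ t in S, M * eLpNorm (b t) p 𝔪 := setLIntegral_mono' hS hexp
    _ = M * ∫⁻ t in S, eLpNorm (b t) p 𝔪 := lintegral_const_mul' _ _ hM.ne
    _ < ∞ := ENNReal.mul_lt_top hM hb_int

end MarginalHolder

theorem intervalIntegrable_of_lintegral_Ioo_ofReal_lt_top {f : ℝ → ℝ} {a b s t : ℝ}
    (hf : AEStronglyMeasurable f (volume.restrict (Ioo a b)))
    (hf₀ : 0 ≤ᵐ[volume.restrict (Ioo a b)] f)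
    (hfin : ∫⁻ r in Ioo a b, ENNReal.ofReal (f r) < ∞) (hs : s ∈ Icc a b) (ht : t ∈ Icc a b) :
    IntervalIntegrable f volume s t := by
  have hIoo : IntegrableOn f (Ioo a b) := ⟨hf, (hasFiniteIntegral_iff_ofReal hf₀).2 hfin⟩
  have hIcc : IntegrableOn f (Icc a b) := hIoo.congr_set_ae Ioo_ae_eq_Icc.symm
  exact (hIcc.mono_set (uIcc_subset_Icc hs ht)).intervalIntegrable

theorem stmt13_general
    {X : Type*} [MetricSpace X]
    [MeasurableSpace X] [BorelSpace X]
    (T : ℝ)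
    {ι : Type} [Countable ι]
    (F : ι → X → ℝ)
    (G : ι → ℝ → X → ℝ) (hG : ∀ i, Measurable (Function.uncurry (G i)))
    (B : ℝ → X → ℝ)
    (hBsup : ∀ t x, B t x = ⨆ i, |G i t x|)
    (hGB : ∀ i t x, |G i t x| ≤ B t x)
    (𝔪 : Measure X) [IsProbabilityMeasure 𝔪]
    (p q : ℝ≥0∞) (hpq : p⁻¹ + q⁻¹ = 1)
    (hBint : ∫⁻ t in Ioo 0 T, eLpNorm (B t) p 𝔪 < ∞)
    (u : ℝ → X → ℝ)
    (hu : ∃ M : ℝ≥0∞, M < ∞ ∧ ∀ t ∈ Icc 0 T, eLpNorm (u t) q 𝔪 ≤ M)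
    (Ω : Type*) [MeasurableSpace Ω] (P : Measure Ω) [IsProbabilityMeasure P]
    (γ : Ω → ℝ → X)
    (hγmeas : ∀ t, Measurable fun ω => γ ω t)
    (hγcont : ∀ ω, Continuous (γ ω))
    (hmarg : ∀ t ∈ Icc 0 T, Measure.map (fun ω => γ ω t) P
      = 𝔪.withDensity (fun x => ENNReal.ofReal (u t x)))
    (hconc : ∀ᵐ ω ∂P, ∀ (i : ι), ∀ s ∈ Icc 0 T, ∀ t ∈ Icc 0 T, s ≤ t →
      F i (γ ω t) - F i (γ ω s) = ∫ r in s..t, G i r (γ ω r)) :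
    ∀ᵐ ω ∂P, ∀ s ∈ Icc 0 T, ∀ t ∈ Icc 0 T, s ≤ t →
      (⨆ i : ι, ENNReal.ofReal |F i (γ ω s) - F i (γ ω t)|)
        ≤ ENNReal.ofReal (∫ r in s..t, B r (γ ω r)) := by
  obtain ⟨M, hM, huM⟩ := hu
  have hB₀ : ∀ t x, 0 ≤ B t x := fun t x => hBsup t x ▸ Real.iSup_nonneg fun i => abs_nonneg _
  have hBmeas : Measurable (Function.uncurry B) := by
    rw [show Function.uncurry B = fun z => ⨆ i, |G i z.1 z.2| from funext fun z => hBsup z.1 z.2]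
    exact Measurable.iSup fun i => (hG i).abs
  have hγ : Measurable fun z : Ω × ℝ => γ z.1 z.2 :=
    (measurable_uncurry_of_continuous_of_measurable (u := fun t ω => γ ω t) hγcont hγmeas).comp
      measurable_swap
  have hfin := ae_lintegral_ofReal_comp_lt_top hpq measurableSet_Ioo hBmeas hBint hM
    (fun t ht => huM t (Ioo_subset_Icc_self ht)) hγ (fun t ht => hmarg t (Ioo_subset_Icc_self ht))
  filter_upwards [hconc, hfin] with ω hω hωfin s hs t ht hst
  have hBω : IntervalIntegrable (fun r => B r (γ ω r)) volume s t :=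
    intervalIntegrable_of_lintegral_Ioo_ofReal_lt_top
      (hBmeas.comp (measurable_id.prodMk (hγcont ω).measurable)).aestronglyMeasurable
      (ae_of_all _ fun r => hB₀ r (γ ω r)) hωfin hs ht
  refine iSup_le fun i => ENNReal.ofReal_le_ofReal ?_
  rw [abs_sub_comm, hω i s hs t ht hst]
  exact intervalIntegral.norm_integral_le_of_norm_le hst
    (ae_of_all _ fun r _ => (Real.norm_eq_abs _).trans_le (hGB i r (γ ω r))) hBω

/-- Let `η` (here a process `(Ω,P,γ)` with continuous paths in a Polish space
`X`) be concentrated on curves along which each `f = F i` of a countable family `A*` is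
absolutely continuous with `(f∘η)' = b_t(f)(η(t)) = G i t (η t)` a.e., where
`|G i t x| ≤ B t x = |b_t|_*(x) = sup_i |G i t x|`.  Assume `|b| = B ∈ L¹((0,T);L^p(𝔪))`
and the marginals are `u_t 𝔪` with `u ∈ L^∞((0,T);L^{p'})`.  Then a.e. curve is absolutely
continuous for the sup-distance `d_{A*}(x,y) = sup_i |F i x − F i y|`, with metric speed
bounded by `B` along the curve: `d_{A*}(γ_s, γ_t) ≤ ∫_s^t B_r(γ_r) dr`. -/
theorem stmt13
    {X : Type*} [MetricSpace X] [TopologicalSpace.SeparableSpace X] [CompleteSpace X]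
    [MeasurableSpace X] [BorelSpace X]
    (T : ℝ) (hT : 0 < T)
    {ι : Type} [Countable ι]
    (F : ι → X → ℝ) (hF : ∀ i, Continuous (F i))
    (G : ι → ℝ → X → ℝ) (hG : ∀ i, Measurable (Function.uncurry (G i)))
    (B : ℝ → X → ℝ)
    (hBsup : ∀ t x, B t x = ⨆ i, |G i t x|)
    (hGB : ∀ i t x, |G i t x| ≤ B t x)
    (𝔪 : Measure X) [IsProbabilityMeasure 𝔪]
    (p q : ℝ≥0∞) (hp : 1 ≤ p) (hpq : p⁻¹ + q⁻¹ = 1)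
    (hBint : ∫⁻ t in Ioo 0 T, eLpNorm (B t) p 𝔪 < ∞)
    (u : ℝ → X → ℝ)
    (hu : ∃ M : ℝ≥0∞, M < ∞ ∧ ∀ t ∈ Icc 0 T, eLpNorm (u t) q 𝔪 ≤ M)
    (Ω : Type*) [MeasurableSpace Ω] (P : Measure Ω) [IsProbabilityMeasure P]
    (γ : Ω → ℝ → X)
    (hγmeas : ∀ t, Measurable fun ω => γ ω t)
    (hγcont : ∀ ω, Continuous (γ ω))
    (hmarg : ∀ t ∈ Icc 0 T, Measure.map (fun ω => γ ω t) P
      = 𝔪.withDensity (fun x => ENNReal.ofReal (u t x)))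
    (hconc : ∀ᵐ ω ∂P, ∀ (i : ι), ∀ s ∈ Icc 0 T, ∀ t ∈ Icc 0 T, s ≤ t →
      F i (γ ω t) - F i (γ ω s) = ∫ r in s..t, G i r (γ ω r)) :
    ∀ᵐ ω ∂P, ∀ s ∈ Icc 0 T, ∀ t ∈ Icc 0 T, s ≤ t →
      (⨆ i : ι, ENNReal.ofReal |F i (γ ω s) - F i (γ ω t)|)
        ≤ ENNReal.ofReal (∫ r in s..t, B r (γ ω r)) :=
  stmt13_general T F G hG B hBsup hGB 𝔪 p q hpq hBint u hu Ω P γ hγmeas hγcont hmarg hconc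
end
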